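/- Let E₀ : ℚ² × ℚ² → ℚ be the standard symplectic form (E₀(e₁,e₂) = 1 = -E₀(e₂,e₁), E₀(eᵢ,eᵢ) = 0), and define the alternating bilinear form E on ℚ⁴ = ℚ² × ℚ² by E((z₁,z₂),(w₁,w₂)) = 2·E₀(z₁,w₁) + 2·E₀(z₂,w₂) - E₀(z₁,w₂) - E₀(z₂,w₁). Then the dual lattice {v ∈ ℚ⁴ : E(v,λ) ∈ ℤ for all λ ∈ ℤ⁴} equals ℤ⁴ + {(x,-x) : x ∈ (1/3)ℤ²}, and its quotient by ℤ⁴ is isomorphic as an abelian group to ℤ/3ℤ × ℤ/3ℤ. -/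

import Mathlib

noncomputable section

/-- The standard symplectic form on ℚ². -/
def stdSymp (z w : Fin 2 → ℚ) : ℚ := z 0 * w 1 - z 1 * w 0

/-- The alternating form E on ℚ⁴ = ℚ² × ℚ² given by
E((z₁,z₂),(w₁,w₂)) = 2E₀(z₁,w₁) + 2E₀(z₂,w₂) - E₀(z₁,w₂) - E₀(z₂,w₁). -/
def polForm (z w : (Fin 2 → ℚ) × (Fin 2 → ℚ)) : ℚ :=
  2 * stdSymp z.1 w.1 + 2 * stdSymp z.2 w.2 - stdSymp z.1 w.2 - stdSymp z.2 w.1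

/-- Inclusion of integer vectors into ℚ². -/
def intVec (m : Fin 2 → ℤ) : Fin 2 → ℚ := fun i => (m i : ℚ)

/-- The dual lattice of ℤ⁴ with respect to E:
all v with E(v,λ) ∈ ℤ for every λ ∈ ℤ⁴ = ℤ² × ℤ². -/
def dualLattice : Set ((Fin 2 → ℚ) × (Fin 2 → ℚ)) :=
  {v | ∀ m : (Fin 2 → ℤ) × (Fin 2 → ℤ),
    ∃ n : ℤ, polForm v (intVec m.1, intVec m.2) = (n : ℚ)}

/-- The set ℤ⁴ + {(x,-x) : x ∈ (1/3)ℤ²} in ℚ² × ℚ². -/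
def dualSet : Set ((Fin 2 → ℚ) × (Fin 2 → ℚ)) :=
  {v | ∃ (m : (Fin 2 → ℤ) × (Fin 2 → ℤ)) (x : Fin 2 → ℤ),
    v = (intVec m.1 + (1 / 3 : ℚ) • intVec x, intVec m.2 - (1 / 3 : ℚ) • intVec x)}

/-- The dual lattice as a ℤ-submodule of ℚ² × ℚ². -/
def dualL : Submodule ℤ ((Fin 2 → ℚ) × (Fin 2 → ℚ)) := Submodule.span ℤ dualSet

/-- The standard lattice ℤ⁴ = ℤ² × ℤ² as a ℤ-submodule of ℚ² × ℚ². -/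
def stdL : Submodule ℤ ((Fin 2 → ℚ) × (Fin 2 → ℚ)) :=
  Submodule.span ℤ {v | ∃ m : (Fin 2 → ℤ) × (Fin 2 → ℤ), v = (intVec m.1, intVec m.2)}

/-!
Since `E(v, w) = E₀(2v₁ - v₂, w₁) + E₀(2v₂ - v₁, w₂)` and `E₀` is unimodular, `v` is dual to `ℤ⁴`
exactly when `2v₁ - v₂` and `2v₂ - v₁` are integral. The unimodular substitution
`3v₁ = 2(2v₁ - v₂) + (2v₂ - v₁)`, `v₁ + v₂ = (2v₁ - v₂) + (2v₂ - v₁)` turns this into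
"`3v₁` and `v₁ + v₂` are integral", which is the description `ℤ⁴ + {(x, -x) : x ∈ ⅓ℤ²}`.
Hence `x ↦ (x/3, -x/3)` maps `ℤ²` onto the quotient by `ℤ⁴`, with kernel `3ℤ²`: the kernel of
reduction mod 3.
-/

theorem LinearMap.nonempty_equiv_of_surjective_of_ker_eq {R M N P : Type*} [Ring R]
    [AddCommGroup M] [AddCommGroup N] [AddCommGroup P] [Module R M] [Module R N] [Module R P]
    {f : M →ₗ[R] N} {g : M →ₗ[R] P} (hf : Function.Surjective f) (hg : Function.Surjective g)
    (h : ker f = ker g) : Nonempty (N ≃ₗ[R] P) :=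
  ⟨(f.quotKerEquivOfSurjective hf).symm ≪≫ₗ Submodule.quotEquivOfEq _ _ h ≪≫ₗ
    g.quotKerEquivOfSurjective hg⟩

def intLattice : Submodule ℤ (Fin 2 → ℚ) :=
  LinearMap.range ((Int.castAddHom ℚ).toIntLinearMap.compLeft (Fin 2))

lemma intVec_mem_intLattice (m : Fin 2 → ℤ) : intVec m ∈ intLattice := ⟨m, rfl⟩

lemma stdSymp_intVec_integral_iff {u : Fin 2 → ℚ} :
    (∀ a : Fin 2 → ℤ, ∃ n : ℤ, stdSymp u (intVec a) = n) ↔ u ∈ intLattice := by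
  constructor
  · intro h
    obtain ⟨n₀, h₀⟩ := h ![0, 1]
    obtain ⟨n₁, h₁⟩ := h ![-1, 0]
    refine ⟨![n₀, n₁], funext fun i => ?_⟩
    fin_cases i <;> simp_all [stdSymp, intVec]
  · rintro ⟨m, rfl⟩ a
    exact ⟨m 0 * a 1 - m 1 * a 0, by simp [stdSymp, intVec]⟩

lemma polForm_eq_stdSymp (v w : (Fin 2 → ℚ) × (Fin 2 → ℚ)) :
    polForm v w = stdSymp ((2 : ℤ) • v.1 - v.2) w.1 + stdSymp ((2 : ℤ) • v.2 - v.1) w.2 := by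
  simp only [polForm, stdSymp, Pi.sub_apply, Pi.smul_apply]
  ring

lemma mem_dualLattice_iff {v : (Fin 2 → ℚ) × (Fin 2 → ℚ)} :
    v ∈ dualLattice ↔ (2 : ℤ) • v.1 - v.2 ∈ intLattice ∧ (2 : ℤ) • v.2 - v.1 ∈ intLattice := by
  simp only [← stdSymp_intVec_integral_iff, dualLattice, polForm_eq_stdSymp, Prod.forall]
  constructor
  · intro h
    refine ⟨fun a => ?_, fun b => ?_⟩
    · simpa [stdSymp, intVec] using h a 0
    · simpa [stdSymp, intVec] using h 0 b
  · rintro ⟨h₁, h₂⟩ a b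
    obtain ⟨n₁, hn₁⟩ := h₁ a
    obtain ⟨n₂, hn₂⟩ := h₂ b
    exact ⟨n₁ + n₂, by rw [hn₁, hn₂]; push_cast; rfl⟩

lemma mem_dualSet_iff {v : (Fin 2 → ℚ) × (Fin 2 → ℚ)} :
    v ∈ dualSet ↔ (3 : ℤ) • v.1 ∈ intLattice ∧ v.1 + v.2 ∈ intLattice := by
  constructor
  · rintro ⟨m, x, rfl⟩
    refine ⟨⟨3 • m.1 + x, ?_⟩, ⟨m.1 + m.2, ?_⟩⟩ <;> ext i <;> simp [intVec]
  · rintro ⟨⟨a, ha⟩, ⟨b, hb⟩⟩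
    refine ⟨(0, b), a, Prod.ext (funext fun i => ?_) (funext fun i => ?_)⟩
    all_goals
      have ha := congrFun ha i
      have hb := congrFun hb i
      simp [intVec] at ha hb ⊢
      linarith

lemma dualLattice_eq_dualSet : dualLattice = dualSet := by
  ext v
  rw [mem_dualLattice_iff, mem_dualSet_iff]
  constructor
  · rintro ⟨h₁, h₂⟩
    constructor
    · convert intLattice.add_mem (intLattice.smul_mem 2 h₁) h₂ using 1
      module
    · convert intLattice.add_mem h₁ h₂ using 1
      module
  · rintro ⟨h₁, h₂⟩
    constructor
    · convert intLattice.sub_mem h₁ h₂ using 1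
      module
    · convert intLattice.sub_mem (intLattice.smul_mem 2 h₂) h₁ using 1
      module

def dualLatticeSubmodule : Submodule ℤ ((Fin 2 → ℚ) × (Fin 2 → ℚ)) :=
  intLattice.comap ((3 : ℤ) • LinearMap.fst ℤ _ _) ⊓
    intLattice.comap (LinearMap.fst ℤ _ _ + LinearMap.snd ℤ _ _)

lemma mem_dualL_iff {v : (Fin 2 → ℚ) × (Fin 2 → ℚ)} :
    v ∈ dualL ↔ (3 : ℤ) • v.1 ∈ intLattice ∧ v.1 + v.2 ∈ intLattice := by
  have : dualSet = dualLatticeSubmodule := by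
    ext v
    simp [mem_dualSet_iff, dualLatticeSubmodule]
  rw [dualL, this, Submodule.span_eq]
  rfl

lemma stdL_eq : stdL = intLattice.prod intLattice := by
  have : {v | ∃ m : (Fin 2 → ℤ) × (Fin 2 → ℤ), v = (intVec m.1, intVec m.2)} =
      intLattice.prod intLattice := by
    ext v
    constructor
    · rintro ⟨m, rfl⟩
      exact ⟨intVec_mem_intLattice m.1, intVec_mem_intLattice m.2⟩
    · rintro ⟨⟨a, ha⟩, ⟨b, hb⟩⟩
      exact ⟨(a, b), Prod.ext ha.symm hb.symm⟩
  rw [stdL, this, Submodule.span_eq]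

def thirdAntidiag : (Fin 2 → ℤ) →ₗ[ℤ] (Fin 2 → ℚ) × (Fin 2 → ℚ) :=
  (AddMonoidHom.mk' (fun x => ((1 / 3 : ℚ) • intVec x, -((1 / 3 : ℚ) • intVec x)))
    fun x y => by ext i <;> simp [intVec] <;> ring).toIntLinearMap

lemma thirdAntidiag_mem_dualL (x : Fin 2 → ℤ) : thirdAntidiag x ∈ dualL := by
  rw [mem_dualL_iff]
  refine ⟨⟨x, ?_⟩, ⟨0, ?_⟩⟩ <;> ext i <;> simp [thirdAntidiag, intVec]

lemma third_smul_intVec_mem_intLattice_iff {x : Fin 2 → ℤ} :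
    (1 / 3 : ℚ) • intVec x ∈ intLattice ↔ ∀ i, 3 ∣ x i := by
  constructor
  · rintro ⟨m, hm⟩ i
    have := congrFun hm i
    simp [intVec] at this
    exact ⟨m i, by exact_mod_cast (by linarith : (x i : ℚ) = 3 * m i)⟩
  · intro h
    choose k hk using h
    exact ⟨k, funext fun i => by simp [intVec, hk]⟩

lemma thirdAntidiag_mem_stdL_iff {x : Fin 2 → ℤ} : thirdAntidiag x ∈ stdL ↔ ∀ i, 3 ∣ x i := by
  rw [stdL_eq, ← third_smul_intVec_mem_intLattice_iff]
  simp [thirdAntidiag]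

def antidiagClass : (Fin 2 → ℤ) →ₗ[ℤ] ↥dualL ⧸ stdL.comap dualL.subtype :=
  (stdL.comap dualL.subtype).mkQ ∘ₗ thirdAntidiag.codRestrict dualL thirdAntidiag_mem_dualL

lemma antidiagClass_surjective : Function.Surjective antidiagClass := by
  intro q
  obtain ⟨⟨v, hv⟩, rfl⟩ := Submodule.mkQ_surjective _ q
  obtain ⟨⟨a, ha⟩, hsum⟩ := mem_dualL_iff.1 hv
  have hdiff : thirdAntidiag a - v = (0, -(v.1 + v.2)) := by
    ext i <;> have := congrFun ha i <;> simp [thirdAntidiag, intVec] at this ⊢ <;> linarith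
  refine ⟨a, (Submodule.Quotient.eq _).2 ?_⟩
  rw [Submodule.mem_comap, Submodule.subtype_apply, Submodule.coe_sub,
    LinearMap.codRestrict_apply, hdiff, stdL_eq]
  exact ⟨intLattice.zero_mem, intLattice.neg_mem hsum⟩

lemma mem_ker_antidiagClass {x : Fin 2 → ℤ} :
    x ∈ LinearMap.ker antidiagClass ↔ ∀ i, 3 ∣ x i := by
  simp [antidiagClass, Submodule.Quotient.mk_eq_zero, thirdAntidiag_mem_stdL_iff]

def reduceMod3 : (Fin 2 → ℤ) →ₗ[ℤ] ZMod 3 × ZMod 3 :=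
  ((Int.castAddHom (ZMod 3)).toIntLinearMap ∘ₗ LinearMap.proj 0).prod
    ((Int.castAddHom (ZMod 3)).toIntLinearMap ∘ₗ LinearMap.proj 1)

lemma reduceMod3_surjective : Function.Surjective reduceMod3 := by
  rintro ⟨a, b⟩
  exact ⟨![a.cast, b.cast], by simp [reduceMod3]⟩

lemma mem_ker_reduceMod3 {x : Fin 2 → ℤ} : x ∈ LinearMap.ker reduceMod3 ↔ ∀ i, 3 ∣ x i := by
  simp [reduceMod3, Fin.forall_fin_two, ZMod.intCast_zmod_eq_zero_iff_dvd]

/-- the dual lattice of ℤ⁴ with respect to E equals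
ℤ⁴ + {(x,-x) : x ∈ (1/3)ℤ²}, and its quotient by ℤ⁴ is isomorphic to
ℤ/3ℤ × ℤ/3ℤ. -/
theorem stmt7 :
    dualLattice = dualSet ∧
    Nonempty ((↥dualL ⧸ (stdL.comap dualL.subtype)) ≃+ (ZMod 3 × ZMod 3)) := by
  refine ⟨dualLattice_eq_dualSet, ?_⟩
  have hker : LinearMap.ker antidiagClass = LinearMap.ker reduceMod3 := by
    ext x
    rw [mem_ker_antidiagClass, mem_ker_reduceMod3]
  obtain ⟨e⟩ := LinearMap.nonempty_equiv_of_surjective_of_ker_eq antidiagClass_surjective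
    reduceMod3_surjective hker
  exact ⟨e.toAddEquiv⟩

end
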